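/- Let u : ℝ⁴ → ℝ be a smooth function satisfying the Husain equation u_{11} + u_{22} + u_{13} u_{24} − u_{14} u_{23} = 0, where u_{ij} = ∂²u/∂xⁱ∂xʲ. Then for every λ ∈ ℝ the vector fields X₁ = ∂₂ + u_{13} ∂₄ − u_{14} ∂₃ + λ ∂₁ and X₂ = ∂₁ − u_{23} ∂₄ + u_{24} ∂₃ − λ ∂₂ commute. -/

import Mathlib

noncomputable def pd {n : ℕ} (i : Fin n) (f : (Fin n → ℝ) → ℝ) (p : Fin n → ℝ) : ℝ :=
  fderiv ℝ f p (Pi.single i 1)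

noncomputable def lieBracket {n : ℕ} (X Y : (Fin n → ℝ) → (Fin n → ℝ)) (p : Fin n → ℝ) :
    Fin n → ℝ :=
  fun i => (∑ j, X p j * pd j (fun q => Y q i) p) - (∑ j, Y p j * pd j (fun q => X q i) p)

lemma pd_contDiff {n : ℕ} {f : (Fin n → ℝ) → ℝ} (hf : ContDiff ℝ (⊤ : ℕ∞) f) (i : Fin n) :
    ContDiff ℝ (⊤ : ℕ∞) (pd i f) := by
  have hd : ContDiff ℝ (⊤ : ℕ∞) (fderiv ℝ f) := hf.fderiv_right (by simp)
  exact hd.clm_apply contDiff_const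

lemma pd_swap {n : ℕ} {f : (Fin n → ℝ) → ℝ} (hf : ContDiff ℝ (⊤ : ℕ∞) f)
    (i j : Fin n) (p : Fin n → ℝ) : pd i (pd j f) p = pd j (pd i f) p := by
  have hd : ContDiff ℝ (⊤ : ℕ∞) (fderiv ℝ f) := hf.fderiv_right (by simp)
  have hda : DifferentiableAt ℝ (fderiv ℝ f) p := hd.differentiable (by simp) p
  have key : ∀ v w : Fin n → ℝ,
      fderiv ℝ (fun q => fderiv ℝ f q w) p v = fderiv ℝ (fderiv ℝ f) p v w := by
    intro v w
    rw [fderiv_clm_apply hda (differentiableAt_const w)]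
    simp
  have hsymm : IsSymmSndFDerivAt ℝ f p := hf.contDiffAt.isSymmSndFDerivAt (by rw [minSmoothness_of_isRCLikeNormedField]; exact WithTop.coe_le_coe.mpr le_top)
  show fderiv ℝ (fun q => fderiv ℝ f q (Pi.single j 1)) p (Pi.single i 1)
      = fderiv ℝ (fun q => fderiv ℝ f q (Pi.single i 1)) p (Pi.single j 1)
  rw [key, key, hsymm.eq]

lemma pd_const {n : ℕ} (i : Fin n) (c : ℝ) (p : Fin n → ℝ) :
    pd i (fun _ => c) p = 0 := by simp [pd]

lemma pd_neg {n : ℕ} (i : Fin n) (f : (Fin n → ℝ) → ℝ) (p : Fin n → ℝ) :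
    pd i (fun q => -(f q)) p = -(pd i f p) := by simp [pd, fderiv_neg]

lemma pd_add {n : ℕ} {f g : (Fin n → ℝ) → ℝ} {p : Fin n → ℝ}
    (hf : DifferentiableAt ℝ f p) (hg : DifferentiableAt ℝ g p) (i : Fin n) :
    pd i (fun q => f q + g q) p = pd i f p + pd i g p := by
  simp [pd, fderiv_fun_add hf hg]

lemma pd_sub {n : ℕ} {f g : (Fin n → ℝ) → ℝ} {p : Fin n → ℝ}
    (hf : DifferentiableAt ℝ f p) (hg : DifferentiableAt ℝ g p) (i : Fin n) :
    pd i (fun q => f q - g q) p = pd i f p - pd i g p := by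
  simp [pd, fderiv_fun_sub hf hg]

lemma pd_mul {n : ℕ} {f g : (Fin n → ℝ) → ℝ} {p : Fin n → ℝ}
    (hf : DifferentiableAt ℝ f p) (hg : DifferentiableAt ℝ g p) (i : Fin n) :
    pd i (fun q => f q * g q) p = f p * pd i g p + pd i f p * g p := by
  simp [pd, fderiv_fun_mul hf hg]; ring

/-- The Lax pair of the Husain equation commutes on every solution. -/
theorem husain_lax_pair_commutes
    (u : (Fin 4 → ℝ) → ℝ) (hu : ContDiff ℝ (⊤ : ℕ∞) u)
    (heq : ∀ q : Fin 4 → ℝ,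
      pd 0 (pd 0 u) q + pd 1 (pd 1 u) q
        + pd 0 (pd 2 u) q * pd 1 (pd 3 u) q - pd 0 (pd 3 u) q * pd 1 (pd 2 u) q = 0)
    (lam : ℝ) (X₁ X₂ : (Fin 4 → ℝ) → (Fin 4 → ℝ))
    (hX₁ : ∀ p : Fin 4 → ℝ, X₁ p = ![lam, 1, -(pd 0 (pd 3 u) p), pd 0 (pd 2 u) p])
    (hX₂ : ∀ p : Fin 4 → ℝ, X₂ p = ![1, -lam, pd 1 (pd 3 u) p, -(pd 1 (pd 2 u) p)]) :
    ∀ p : Fin 4 → ℝ, lieBracket X₁ X₂ p = 0 := by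
  have pdC : ∀ c : Fin 4, ContDiff ℝ (⊤ : ℕ∞) (pd c u) := fun c => pd_contDiff hu c
  have pdCC : ∀ b c : Fin 4, ContDiff ℝ (⊤ : ℕ∞) (pd b (pd c u)) := fun b c => pd_contDiff (pdC c) b
  have dCC : ∀ (b c : Fin 4) (p : Fin 4 → ℝ), DifferentiableAt ℝ (pd b (pd c u)) p :=
    fun b c p => (pdCC b c).differentiable (by simp) p
  have swapF : ∀ a b : Fin 4, pd a (pd b u) = pd b (pd a u) := fun a b => funext (pd_swap hu a b)
  have sw1 : ∀ (a b c : Fin 4) (p : Fin 4 → ℝ),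
      pd a (pd b (pd c u)) p = pd b (pd a (pd c u)) p := fun a b c p => pd_swap (pdC c) a b p
  have sw2 : ∀ (a b c : Fin 4) (p : Fin 4 → ℝ),
      pd a (pd b (pd c u)) p = pd a (pd c (pd b u)) p := by
    intro a b c p; rw [swapF b c]
  have heq' : ∀ (k : Fin 4) (p : Fin 4 → ℝ),
      pd k (pd 0 (pd 0 u)) p + pd k (pd 1 (pd 1 u)) p
      + (pd 0 (pd 2 u) p * pd k (pd 1 (pd 3 u)) p + pd k (pd 0 (pd 2 u)) p * pd 1 (pd 3 u) p)
      - (pd 0 (pd 3 u) p * pd k (pd 1 (pd 2 u)) p + pd k (pd 0 (pd 3 u)) p * pd 1 (pd 2 u) p)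
      = 0 := by
    intro k p
    have h0 : (fun q => pd 0 (pd 0 u) q + pd 1 (pd 1 u) q
        + pd 0 (pd 2 u) q * pd 1 (pd 3 u) q - pd 0 (pd 3 u) q * pd 1 (pd 2 u) q)
        = fun _ => (0:ℝ) := funext heq
    have h1 : pd k (fun q => pd 0 (pd 0 u) q + pd 1 (pd 1 u) q
        + pd 0 (pd 2 u) q * pd 1 (pd 3 u) q - pd 0 (pd 3 u) q * pd 1 (pd 2 u) q) p = 0 := by
      rw [h0, pd_const]
    rw [pd_sub (((dCC 0 0 p).fun_add (dCC 1 1 p)).fun_add ((dCC 0 2 p).fun_mul (dCC 1 3 p)))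
        ((dCC 0 3 p).fun_mul (dCC 1 2 p)),
      pd_add ((dCC 0 0 p).fun_add (dCC 1 1 p)) ((dCC 0 2 p).fun_mul (dCC 1 3 p)),
      pd_add (dCC 0 0 p) (dCC 1 1 p),
      pd_mul (dCC 0 2 p) (dCC 1 3 p), pd_mul (dCC 0 3 p) (dCC 1 2 p)] at h1
    linarith [h1]
  intro p
  have f10 : (fun q => X₁ q 0) = fun _ => lam := by funext q; rw [hX₁ q]; rfl
  have f11 : (fun q => X₁ q 1) = fun _ => (1:ℝ) := by funext q; rw [hX₁ q]; rfl
  have f12 : (fun q => X₁ q 2) = fun q => -(pd 0 (pd 3 u) q) := by funext q; rw [hX₁ q]; rfl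
  have f13 : (fun q => X₁ q 3) = pd 0 (pd 2 u) := by funext q; rw [hX₁ q]; rfl
  have f20 : (fun q => X₂ q 0) = fun _ => (1:ℝ) := by funext q; rw [hX₂ q]; rfl
  have f21 : (fun q => X₂ q 1) = fun _ => (-lam) := by funext q; rw [hX₂ q]; rfl
  have f22 : (fun q => X₂ q 2) = pd 1 (pd 3 u) := by funext q; rw [hX₂ q]; rfl
  have f23 : (fun q => X₂ q 3) = fun q => -(pd 1 (pd 2 u) q) := by funext q; rw [hX₂ q]; rfl
  have c0 : lieBracket X₁ X₂ p 0 = 0 := by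
    simp [lieBracket, Fin.sum_univ_four, f10, f20, pd_const]
  have c1 : lieBracket X₁ X₂ p 1 = 0 := by
    simp [lieBracket, Fin.sum_univ_four, f11, f21, pd_const]
  have c2 : lieBracket X₁ X₂ p 2 = 0 := by
    simp only [lieBracket, Fin.sum_univ_four, f22, f12, pd_neg, hX₁ p, hX₂ p,
      Matrix.cons_val_zero, Matrix.cons_val_one, Matrix.head_cons,
      Matrix.cons_val_two, Matrix.tail_cons, Matrix.cons_val_three]
    have h := heq' 3 p
    have h300 : pd 3 (pd 0 (pd 0 u)) p = pd 0 (pd 0 (pd 3 u)) p := by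
      rw [sw1 3 0 0 p, sw2 0 3 0 p]
    have h311 : pd 3 (pd 1 (pd 1 u)) p = pd 1 (pd 1 (pd 3 u)) p := by
      rw [sw1 3 1 1 p, sw2 1 3 1 p]
    have h302 : pd 3 (pd 0 (pd 2 u)) p = pd 0 (pd 2 (pd 3 u)) p := by
      rw [sw1 3 0 2 p, sw2 0 3 2 p]
    have h312 : pd 3 (pd 1 (pd 2 u)) p = pd 1 (pd 2 (pd 3 u)) p := by
      rw [sw1 3 1 2 p, sw2 1 3 2 p]
    rw [h300, h311, h302, h312, sw1 3 1 3 p, sw1 3 0 3 p] at h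
    rw [sw1 1 0 3 p, sw1 2 1 3 p, sw1 3 1 3 p, sw1 2 0 3 p, sw1 3 0 3 p]
    linear_combination h
  have c3 : lieBracket X₁ X₂ p 3 = 0 := by
    simp only [lieBracket, Fin.sum_univ_four, f23, f13, pd_neg, hX₁ p, hX₂ p,
      Matrix.cons_val_zero, Matrix.cons_val_one, Matrix.head_cons,
      Matrix.cons_val_two, Matrix.tail_cons, Matrix.cons_val_three]
    have h := heq' 2 p
    have h200 : pd 2 (pd 0 (pd 0 u)) p = pd 0 (pd 0 (pd 2 u)) p := by
      rw [sw1 2 0 0 p, sw2 0 2 0 p]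
    have h211 : pd 2 (pd 1 (pd 1 u)) p = pd 1 (pd 1 (pd 2 u)) p := by
      rw [sw1 2 1 1 p, sw2 1 2 1 p]
    have h213 : pd 2 (pd 1 (pd 3 u)) p = pd 1 (pd 2 (pd 3 u)) p := sw1 2 1 3 p
    have h203 : pd 2 (pd 0 (pd 3 u)) p = pd 0 (pd 2 (pd 3 u)) p := sw1 2 0 3 p
    rw [h200, h211, h213, h203, sw1 2 0 2 p, sw1 2 1 2 p] at h
    have g312 : pd 3 (pd 1 (pd 2 u)) p = pd 1 (pd 2 (pd 3 u)) p := by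
      rw [sw1 3 1 2 p, sw2 1 3 2 p]
    have g302 : pd 3 (pd 0 (pd 2 u)) p = pd 0 (pd 2 (pd 3 u)) p := by
      rw [sw1 3 0 2 p, sw2 0 3 2 p]
    rw [sw1 1 0 2 p, sw1 2 1 2 p, g312, sw1 2 0 2 p, g302]
    linear_combination -h
  funext i
  fin_cases i
  · exact c0
  · exact c1
  · exact c2
  · exact c3
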